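/- Let α, β, n ∈ ℕ and let F_1 < ⋯ < F_n be members of the Schreier family S_α such that {min F_i : i ≤ n} belongs to S_β. Then F_1 ∪ ⋯ ∪ F_n belongs to S_{α+β}. -/

import Mathlib

open Filter Topology

open scoped Classical

noncomputable section

namespace Gasparis

/-! ## Schreier families and admissibility -/

/-- `E < F` for finite sets: every element of `E` is smaller than every element of `F`. -/
def FinLt (E F : Finset ℕ) : Prop := ∀ i ∈ E, ∀ j ∈ F, i < j

/-- The Schreier families `S_n`. -/
def Schreier : ℕ → Set (Finset ℕ)
  | 0 => {F | F.card ≤ 1}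
  | n + 1 => {F | F = ∅ ∨ ∃ (k : ℕ) (G : ℕ → Finset ℕ), 0 < k ∧
      (∀ i < k, G i ∈ Schreier n ∧ (G i).Nonempty) ∧
      (∀ i j, i < j → j < k → FinLt (G i) (G j)) ∧
      (∀ j ∈ G 0, k ≤ j) ∧
      F = (Finset.range k).biUnion G}

/-- Minimum of a finite set of naturals (junk value `0` for `∅`). -/
def minF (I : Finset ℕ) : ℕ := sInf (I : Set ℕ)

/-- Minimum of the support of a finitely supported sequence. -/
def minSupp (f : ℕ →₀ ℝ) : ℕ := minF f.support

/-- `I 0 < I 1 < ⋯ < I (k-1)` is an `S_n`-admissible collection. -/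
def Admissible (n k : ℕ) (I : ℕ → Finset ℕ) : Prop :=
  (∀ i < k, (I i).Nonempty) ∧
  (∀ i j, i < j → j < k → FinLt (I i) (I j)) ∧
  ((Finset.range k).image fun i => minF (I i)) ∈ Schreier n

/-- An (unordered) family of finite sets is `S_n`-admissible. -/
def FamAdmissible (n : ℕ) (𝓕 : Finset (Finset ℕ)) : Prop :=
  (∀ I ∈ 𝓕, I.Nonempty) ∧
  (∀ I ∈ 𝓕, ∀ J ∈ 𝓕, I ≠ J → FinLt I J ∨ FinLt J I) ∧
  𝓕.image minF ∈ Schreier n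

/-- `F` is a maximal (under inclusion) member of `S_n`. -/
def MaximalSchreier (n : ℕ) (F : Finset ℕ) : Prop :=
  F ∈ Schreier n ∧ ∀ G ∈ Schreier n, F ⊆ G → G = F

/-! ## The Schreier and conditional Schreier norms on `c₀₀ = ℕ →₀ ℝ` -/

/-- The `n`-th Schreier norm on `c₀₀`. -/
def schreierNorm (n : ℕ) (x : ℕ →₀ ℝ) : ℝ :=
  sSup {r : ℝ | ∃ F ∈ Schreier n, r = ∑ i ∈ F, |x i|}

/-- The `n`-th conditional Schreier norm on `c₀₀`. -/
def cschreierNorm (n : ℕ) (x : ℕ →₀ ℝ) : ℝ :=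
  sSup {r : ℝ | ∃ (k : ℕ) (J : ℕ → Finset ℕ),
    (∀ i < k, ∃ a b : ℕ, J i = Finset.Icc a b) ∧ Admissible n k J ∧
    r = ∑ i ∈ Finset.range k, |∑ p ∈ J i, x p|}

/-! ## Block sequences, described by their coefficients -/

/-- A block basis, given by the (finitely supported) coefficient sequences of its vectors:
successive nonempty supports. -/
def IsBlockSeq (u : ℕ → ℕ →₀ ℝ) : Prop :=
  (∀ k, u k ≠ 0) ∧ ∀ k, ∀ i ∈ (u k).support, ∀ j ∈ (u (k + 1)).support, i < j

/-- `v` is a block basis of the block basis `u`. -/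
def IsBlockSeqOf (v u : ℕ → ℕ →₀ ℝ) : Prop :=
  IsBlockSeq v ∧ ∃ d : ℕ → ℕ →₀ ℝ, IsBlockSeq d ∧
    ∀ k, v k = (d k).sum fun i a => a • u i

/-- The vector of `X` with coefficients `f` with respect to the sequence `e`. -/
def vecIn {X : Type*} [AddCommGroup X] [Module ℝ X] (e : ℕ → X) (f : ℕ →₀ ℝ) : X :=
  f.sum fun i a => a • e i

/-! ## Schauder bases -/

/-- A Schauder basis of a Banach space, bundled with its biorthogonal functionals. -/
structure SchauderBasis (X : Type*) [NormedAddCommGroup X] [NormedSpace ℝ X] where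
  e : ℕ → X
  coord : ℕ → X →L[ℝ] ℝ
  biorth : ∀ i j, coord i (e j) = if i = j then (1 : ℝ) else 0
  expand : ∀ x : X, Tendsto (fun k => ∑ i ∈ Finset.range k, coord i x • e i) atTop (𝓝 x)

variable {X : Type*}

def NormalizedBasis [NormedAddCommGroup X] [NormedSpace ℝ X] (b : SchauderBasis X) : Prop :=
  ∀ i, ‖b.e i‖ = 1

/-- Every projection onto an interval of coordinates has norm at most `1`. -/
def Bimonotone [NormedAddCommGroup X] [NormedSpace ℝ X] (b : SchauderBasis X) : Prop :=
  ∀ (x : X) (a c : ℕ), ‖∑ i ∈ Finset.Icc a c, b.coord i x • b.e i‖ ≤ ‖x‖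

/-- The biorthogonal functionals form a basis of the dual: the expansion of every
continuous functional converges to it. -/
def Shrinking [NormedAddCommGroup X] [NormedSpace ℝ X] (b : SchauderBasis X) : Prop :=
  ∀ f : X →L[ℝ] ℝ,
    Tendsto (fun k => ‖f - ∑ i ∈ Finset.range k, f (b.e i) • b.coord i‖) atTop (𝓝 (0 : ℝ))

def BoundedlyComplete [NormedAddCommGroup X] [NormedSpace ℝ X] (b : SchauderBasis X) : Prop :=
  ∀ a : ℕ → ℝ, (∃ C : ℝ, ∀ k, ‖∑ i ∈ Finset.range k, a i • b.e i‖ ≤ C) →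
    ∃ x : X, Tendsto (fun k => ∑ i ∈ Finset.range k, a i • b.e i) atTop (𝓝 x)

/-- `1`-unconditionality: changing signs of coefficients does not increase the norm. -/
def OneUnconditional [NormedAddCommGroup X] [NormedSpace ℝ X] (b : SchauderBasis X) : Prop :=
  ∀ (a ε : ℕ → ℝ) (F : Finset ℕ), (∀ i, ε i = 1 ∨ ε i = -1) →
    ‖∑ i ∈ F, (ε i * a i) • b.e i‖ ≤ ‖∑ i ∈ F, a i • b.e i‖

/-! ## Spreading models, asymptotic `ℓ¹` and the distortion property -/

/-- `(x_n)` is an `ε`-`ℓ¹ⁿ` spreading model. -/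
def SpreadingModelL1 [NormedAddCommGroup X] [NormedSpace ℝ X]
    (x : ℕ → X) (ε : ℝ) (n : ℕ) : Prop :=
  ∀ F ∈ Schreier n, ∀ a : ℕ → ℝ, ε * ∑ i ∈ F, |a i| ≤ ‖∑ i ∈ F, a i • x i‖

/-- Every normalized block basis of `(e_n)` is an `ε`-`ℓ¹ⁿ` spreading model. -/
def AsymptoticL1 [NormedAddCommGroup X] [NormedSpace ℝ X]
    (b : SchauderBasis X) (ε : ℝ) (n : ℕ) : Prop :=
  ∀ u : ℕ → ℕ →₀ ℝ, IsBlockSeq u → (∀ k, ‖vecIn b.e (u k)‖ = 1) →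
    SpreadingModelL1 (fun k => vecIn b.e (u k)) ε n

/-- The modulus `τ(U, δ) ∈ ℕ∞` of the block subspace `U` generated by the block basis `u`. -/
def tau [NormedAddCommGroup X] [NormedSpace ℝ X]
    (e : ℕ → X) (u : ℕ → ℕ →₀ ℝ) (δ : ℝ) : ℕ∞ :=
  sSup {z : ℕ∞ | ∃ ζ : ℕ, z = (ζ : ℕ∞) ∧
    ∀ v : ℕ → ℕ →₀ ℝ, IsBlockSeqOf v u → (∀ k, ‖vecIn e (v k)‖ = 1) →
      ∃ φ : ℕ → ℕ, StrictMono φ ∧ SpreadingModelL1 (fun k => vecIn e (v (φ k))) δ ζ}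

/-- The `(d, N, P, a)` distortion property (with the standing assumptions on `d, N, P, a`). -/
structure DistortionProperty [NormedAddCommGroup X] [NormedSpace ℝ X]
    (b : SchauderBasis X) (d : ℝ) (N P : ℕ → ℕ) (δ : ℕ → ℝ) : Prop where
  one_lt_d : 1 < d
  N_mono : StrictMono N
  P_mono : StrictMono P
  N_le_P : ∀ i, (if i = 0 then 1 else N (i - 1)) ≤ P i
  P_lt_N : ∀ i, 2 * P i < N i
  δ_pos : ∀ i, 0 < δ i
  δ_anti : ∀ i, δ (i + 1) ≤ δ i
  δ_null : Tendsto δ atTop (𝓝 (0 : ℝ))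
  asymptotic : ∀ j, AsymptoticL1 b (δ j) (N j)
  tau_lt : ∀ j, ∀ u : ℕ → ℕ →₀ ℝ, IsBlockSeq u → tau b.e u (d * δ j) < (P j : ℕ∞)

/-! ## Subspaces, hereditary indecomposability, total incomparability, distortion -/

/-- An (infinite-dimensional, closed) subspace of a Banach space. -/
def IsBanachSubspace [NormedAddCommGroup X] [NormedSpace ℝ X] (Y : Submodule ℝ X) : Prop :=
  IsClosed (Y : Set X) ∧ ¬ FiniteDimensional ℝ Y

/-- Hereditarily indecomposable. -/
def HI (X : Type*) [NormedAddCommGroup X] [NormedSpace ℝ X] : Prop :=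
  ∀ Y Z : Submodule ℝ X, IsBanachSubspace Y → IsBanachSubspace Z → Y ⊓ Z = ⊥ →
    ¬ IsClosed ((Y ⊔ Z : Submodule ℝ X) : Set X)

/-- No subspace of `X` is isomorphic to a subspace of `Y`. -/
def TotallyIncomparable (X Y : Type*) [NormedAddCommGroup X] [NormedSpace ℝ X]
    [NormedAddCommGroup Y] [NormedSpace ℝ Y] : Prop :=
  ∀ (U : Submodule ℝ X) (V : Submodule ℝ Y), IsBanachSubspace U → IsBanachSubspace V →
    IsEmpty (U ≃L[ℝ] V)

/-- An equivalent norm on `X`. -/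
structure IsEquivNorm [NormedAddCommGroup X] [NormedSpace ℝ X] (Nn : X → ℝ) : Prop where
  add_le : ∀ x y : X, Nn (x + y) ≤ Nn x + Nn y
  smul_eq : ∀ (a : ℝ) (x : X), Nn (a • x) = |a| * Nn x
  lower : ∃ c : ℝ, 0 < c ∧ ∀ x : X, c * ‖x‖ ≤ Nn x
  upper : ∃ C : ℝ, 0 < C ∧ ∀ x : X, Nn x ≤ C * ‖x‖

def ArbitrarilyDistortable (X : Type*) [NormedAddCommGroup X] [NormedSpace ℝ X] : Prop :=
  ∀ lam : ℝ, 1 < lam → ∃ Nn : X → ℝ, IsEquivNorm Nn ∧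
    ∀ Y : Submodule ℝ X, IsBanachSubspace Y →
      ∃ x ∈ Y, ∃ y ∈ Y, x ≠ 0 ∧ y ≠ 0 ∧ ‖x‖ = ‖y‖ ∧ lam < Nn x / Nn y

/-- Reflexivity: the canonical embedding into the double dual is surjective. -/
def IsReflexiveSpace (X : Type*) [NormedAddCommGroup X] [NormedSpace ℝ X] : Prop :=
  Function.Surjective (NormedSpace.inclusionInDoubleDual ℝ X)

/-- A bundled (real, infinite-dimensional or not) Banach space. -/
structure BanachSpaceB where
  carrier : Type
  [grp : NormedAddCommGroup carrier]
  [mod : NormedSpace ℝ carrier]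
  [comp : CompleteSpace carrier]

attribute [instance] BanachSpaceB.grp BanachSpaceB.mod BanachSpaceB.comp

/-! ## `M`-good sequences -/

/-- The sequence `f_j^N` (0-indexed: `fN m n j` is the paper's `f_{j+1}^N`). -/
def fN (m n : ℕ → ℕ) : ℕ → ℕ
  | 0 => 1
  | j + 1 => sSup {s : ℕ | ∃ ρ : ℕ → ℕ,
      (∏ i ∈ Finset.range (j + 1), m i ^ ρ i) < m (j + 1) ^ 3 ∧
      s = ∑ i ∈ Finset.range (j + 1), ρ i * n i}

/-- Standing assumptions on the fixed sequences `M = (m_i)` and `L = (l_i)`. -/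
structure MLParams (m l : ℕ → ℕ) : Prop where
  m_mono : StrictMono m
  m_six : 6 < m 0
  m_sq : ∀ i, m i ^ 2 < m (i + 1)
  l_mono : StrictMono l
  l_four : 4 < l 0
  l_exp : ∀ i, m i < 2 ^ l i

/-- `N = (n_i)` (an infinite subset of `ℕ`, given by its increasing enumeration)
is `M`-good: `l_j (f_j^N + 1) < n_j` for all `j`. -/
def MGoodSeq (m l n : ℕ → ℕ) : Prop :=
  StrictMono n ∧ ∀ j, l j * (fN m n j + 1) < n j

/-! ## Appropriate trees -/

/-- A node of a tree: a nonempty list of triples `(m-entry, interval, sign)`. -/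
abbrev GNode := List (ℕ × Finset ℕ × ℤ)

def mEnt (α : GNode) : ℕ := (α.getLastD (0, ∅, 1)).1
def iEnt (α : GNode) : Finset ℕ := (α.getLastD (0, ∅, 1)).2.1
def sEnt (α : GNode) : ℤ := (α.getLastD (0, ∅, 1)).2.2

/-- `α` is a terminal node of the tree `T`. -/
def IsTerminalIn (T : Finset GNode) (α : GNode) : Prop :=
  ∀ β ∈ T, α <+: β → β = α

/-- The immediate successors of `α` in `T`. -/
def childrenIn (T : Finset GNode) (α : GNode) : Finset GNode :=
  T.filter fun β => β.length = α.length + 1 ∧ α <+: β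

/-- Appropriate trees (with respect to the data `M = (m_i)`, `N = (n_i)`). -/
def IsAppropriate (m n : ℕ → ℕ) (T : Finset GNode) : Prop :=
  T.Nonempty ∧
  (∀ α ∈ T, α ≠ []) ∧
  (∀ α ∈ T, ∀ k, 0 < k → k ≤ α.length → α.take k ∈ T) ∧
  (∀ α ∈ T, ∀ β ∈ T, α.length = 1 → β.length = 1 → α = β) ∧
  (∀ α ∈ T, ∀ t ∈ α, ((t : ℕ × Finset ℕ × ℤ).2.2 = 1 ∨ t.2.2 = -1) ∧ t.2.1.Nonempty) ∧
  (∀ α ∈ T, IsTerminalIn T α → mEnt α = 0 ∧ ∃ p : ℕ, iEnt α = {p}) ∧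
  (∀ α ∈ T, ¬ IsTerminalIn T α → ∃ j : ℕ, mEnt α = m j ∧
    FamAdmissible (n j) ((childrenIn T α).image iEnt) ∧
    iEnt α = (childrenIn T α).sup iEnt)

/-- The family `𝒢` of appropriate trees. -/
def 𝒢 (m n : ℕ → ℕ) : Set (Finset GNode) := {T | IsAppropriate m n T}

/-- The root of a tree. -/
def rootOf (T : Finset GNode) : GNode :=
  if h : (T.filter fun α => α.length = 1).Nonempty then h.choose else []

/-- `m(α)`: product of the `M`-entries of the predecessor of `α`. -/
def mWeight (α : GNode) : ℕ := (α.dropLast.map fun t => t.1).prod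

/-- `ε(α)`: product of the signs of the proper predecessors of `α`. -/
def epsProd (α : GNode) : ℤ := (α.dropLast.map fun t => t.2.2).prod

/-- `n(α)`: sum of the `n_i` over the `M`-entries `m_i` of the predecessor of `α`. -/
def nVal (m n : ℕ → ℕ) (α : GNode) : ℕ :=
  (α.dropLast.map fun t => n (sInf {j | m j = t.1})).sum

/-- The point `p_α` of a terminal node. -/
def pOf (α : GNode) : ℕ := minF (iEnt α)

/-- The measure `mu_𝒯` associated to a tree. -/
def treeMeasure (T : Finset GNode) : ℕ →₀ ℝ :=
  ∑ α ∈ T.filter (fun α => IsTerminalIn T α),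
    ((mWeight α : ℝ)⁻¹ * ((epsProd α * sEnt α : ℤ) : ℝ)) • Finsupp.single (pOf α) (1 : ℝ)

/-- The weight `w(𝒯)`. -/
def treeWeight (T : Finset GNode) : ℕ :=
  if T.card = 1 then 1 else mEnt (rootOf T)

/-- Action of a finitely supported measure on an element of `c₀₀`. -/
def mpair (mu x : ℕ →₀ ℝ) : ℝ := mu.sum fun i c => c * x i

/-- The norming set `𝓜 = {mu_𝒯 : 𝒯 ∈ 𝒢}`. -/
def normingSetOf (m n : ℕ → ℕ) : Set (ℕ →₀ ℝ) :=
  {mu | ∃ T ∈ 𝒢 m n, mu = treeMeasure T}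

/-- The norm of `X_𝓜` on `c₀₀`. -/
def mNorm (m n : ℕ → ℕ) (x : ℕ →₀ ℝ) : ℝ :=
  sSup {r : ℝ | ∃ mu ∈ normingSetOf m n, r = mpair mu x}

/-- A family of trees is `S_k`-admissible if the family of root intervals is. -/
def TreeFamAdmissible (k : ℕ) (G₀ : Finset (Finset GNode)) : Prop :=
  FamAdmissible k (G₀.image fun T => iEnt (rootOf T))

/-! ## The repeated averages hierarchy -/

/-- Auxiliary step for the repeated averages hierarchy. -/
def ravgS (f : Set ℕ → ℕ → (ℕ →₀ ℝ)) (R : Set ℕ) : ℕ → (ℕ →₀ ℝ)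
  | 0 => ((sInf R : ℕ) : ℝ)⁻¹ • ∑ i ∈ Finset.range (sInf R), f R i
  | k + 1 =>
    let R' : Set ℕ := {r ∈ R | ∀ j ∈ (ravgS f R k).support, j < r}
    ((sInf R' : ℕ) : ℝ)⁻¹ • ∑ i ∈ Finset.range (sInf R'), f R' i

/-- The repeated averages hierarchy `ξ_k^R` (`k` 0-indexed). -/
def ravg : ℕ → Set ℕ → ℕ → (ℕ →₀ ℝ)
  | 0 => fun R k => Finsupp.single (Nat.nth (· ∈ R) k) 1
  | ξ + 1 => ravgS (ravg ξ)

/-- `‖mu‖_k = sup{mu(F) : F ∈ S_k}`. -/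
def measNorm (k : ℕ) (mu : ℕ →₀ ℝ) : ℝ :=
  sSup {r : ℝ | ∃ F ∈ Schreier k, r = ∑ i ∈ F, mu i}

/-- The sequence of minima of supports of a block basis. -/
def pSeq (u : ℕ → ℕ →₀ ℝ) (k : ℕ) : ℕ := minSupp (u k)

/-- `v` is a generic `(ε, ξ)` average of the block basis `u`. -/
def IsGenericAvg (u : ℕ → ℕ →₀ ℝ) (ε : ℝ) (ξ : ℕ) (v : ℕ →₀ ℝ) : Prop :=
  ∃ R : Set ℕ, R.Infinite ∧ R ⊆ Set.range (pSeq u) ∧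
    measNorm (ξ - 1) (ravg ξ R 0) < ε ∧
    v = (ravg ξ R 0).sum fun q c => c • u (sInf {k | pSeq u k = q})

/-- `v` is an `(ε, ξ)` average of `u`: a generic `(ε, ξ)` average of a normalized
(w.r.t. the norm `nrm`) block basis of `u`. -/
def IsAvg (nrm : (ℕ →₀ ℝ) → ℝ) (u : ℕ → ℕ →₀ ℝ) (ε : ℝ) (ξ : ℕ) (v : ℕ →₀ ℝ) : Prop :=
  ∃ w : ℕ → ℕ →₀ ℝ, IsBlockSeqOf w u ∧ (∀ k, nrm (w k) = 1) ∧ IsGenericAvg w ε ξ v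

/-- `x` is a smoothly normalized `(ε, ξ)` average of `u`. -/
def IsSmoothNormAvg (nrm : (ℕ →₀ ℝ) → ℝ) (u : ℕ → ℕ →₀ ℝ) (ε : ℝ) (ξ : ℕ)
    (x : ℕ →₀ ℝ) : Prop :=
  ∃ v : ℕ →₀ ℝ, IsAvg nrm u ε ξ v ∧ (1 : ℝ) / 2 ≤ nrm v ∧ x = (nrm v)⁻¹ • v

/-! ## Infinite subsets of `ℕ` as points of the Cantor space -/

/-- The increasing enumeration of the set coded by `S : ℕ → Bool` (1st element = index 0). -/
def enumOf (S : ℕ → Bool) : ℕ → ℕ := Nat.nth fun i => S i = true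

/-- The set coded by `S` is `M`-good. -/
def MGoodB (m l : ℕ → ℕ) (S : ℕ → Bool) : Prop := MGoodSeq m l (enumOf S)

/-- The infinite subsets of the set coded by `N₀`, as a topological (sub)space of the
Cantor space `ℕ → Bool` with the product (pointwise convergence) topology. -/
def SubsetsOf (N₀ : ℕ → Bool) : Type :=
  {S : ℕ → Bool // {i | S i = true}.Infinite ∧ ∀ i, S i = true → N₀ i = true}

instance (N₀ : ℕ → Bool) : TopologicalSpace (SubsetsOf N₀) :=
  instTopologicalSpaceSubtype

/-!
Induction on `β`. For `β = 0` the minima, hence the sets, are at most one. For `β + 1` the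
minima split as `G 0 < ⋯ < G (t-1)` with `G j ∈ S_β` and `t ≤ min (G 0)`; grouping the `F i`
according to the block `G j` that contains `min (F i)` yields `t` successive unions, each in
`S_{α+β}` by induction, the first of which starts at some `min (F i) ≥ t`.
-/

lemma empty_mem_schreier (n : ℕ) : (∅ : Finset ℕ) ∈ Schreier n := by
  cases n with
  | zero => simp [Schreier]
  | succ n => rw [Schreier]; exact Or.inl rfl

lemma minF_mem {I : Finset ℕ} (h : I.Nonempty) : minF I ∈ I := by
  simpa [minF] using Nat.sInf_mem (s := (I : Set ℕ)) h

lemma minF_le {I : Finset ℕ} {x : ℕ} (h : x ∈ I) : minF I ≤ x :=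
  Nat.sInf_le h

lemma FinLt.minF_lt {E F : Finset ℕ} (h : FinLt E F) (hE : E.Nonempty) (hF : F.Nonempty) :
    minF E < minF F :=
  h _ (minF_mem hE) _ (minF_mem hF)

def SuccessiveOn (F : ℕ → Finset ℕ) (A : Finset ℕ) : Prop :=
  (∀ i ∈ A, (F i).Nonempty) ∧ ∀ i ∈ A, ∀ j ∈ A, i < j → FinLt (F i) (F j)

namespace SuccessiveOn

variable {F : ℕ → Finset ℕ} {A B C : Finset ℕ}

lemma mono (h : SuccessiveOn F A) (hB : B ⊆ A) : SuccessiveOn F B :=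
  ⟨fun i hi => h.1 i (hB hi), fun i hi j hj => h.2 i (hB hi) j (hB hj)⟩

lemma strictMonoOn_minF (h : SuccessiveOn F A) : StrictMonoOn (fun i => minF (F i)) A :=
  fun i hi j hj hij => (h.2 i hi j hj hij).minF_lt (h.1 i hi) (h.1 j hj)

lemma finLt_biUnion (h : SuccessiveOn F A) (hB : B ⊆ A) (hC : C ⊆ A)
    (hBC : FinLt (B.image fun i => minF (F i)) (C.image fun i => minF (F i))) :
    FinLt (B.biUnion F) (C.biUnion F) := by
  intro x hx y hy
  obtain ⟨i, hi, hxi⟩ := Finset.mem_biUnion.1 hx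
  obtain ⟨j, hj, hyj⟩ := Finset.mem_biUnion.1 hy
  have hmin : minF (F i) < minF (F j) :=
    hBC _ (Finset.mem_image_of_mem _ hi) _ (Finset.mem_image_of_mem _ hj)
  exact h.2 i (hB hi) j (hC hj) ((h.strictMonoOn_minF.lt_iff_lt (hB hi) (hC hj)).1 hmin)
    x hxi y hyj

lemma card_le_one_of_card_image_le_one (h : SuccessiveOn F A)
    (himage : (A.image fun i => minF (F i)).card ≤ 1) : A.card ≤ 1 := by
  rwa [Finset.card_image_of_injOn h.strictMonoOn_minF.injOn] at himage

end SuccessiveOn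

lemma biUnion_mem_of_card_le_one {S : Set (Finset ℕ)} (hS : ∅ ∈ S) {F : ℕ → Finset ℕ}
    {A : Finset ℕ} (hA : A.card ≤ 1) (hmem : ∀ i ∈ A, F i ∈ S) : A.biUnion F ∈ S := by
  obtain ⟨a, haA⟩ := Finset.card_le_one_iff_subset_singleton.1 hA
  rcases Finset.subset_singleton_iff.1 haA with rfl | rfl
  · simpa using hS
  · simpa using hmem a (Finset.mem_singleton_self a)

section Regrouping

variable {ι : Type*} (m : ι → ℕ) (A : Finset ι) (G : ℕ → Finset ℕ)

def blockIndices (j : ℕ) : Finset ι := A.filter fun i => m i ∈ G j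

lemma image_blockIndices {j : ℕ} (hG : G j ⊆ A.image m) :
    (blockIndices m A G j).image m = G j := by
  rw [blockIndices, ← Finset.filter_image (p := (· ∈ G j)), Finset.filter_mem_eq_inter,
    Finset.inter_eq_right]
  exact hG

lemma biUnion_blockIndices [DecidableEq ι] {t : ℕ}
    (hA : A.image m = (Finset.range t).biUnion G) :
    (Finset.range t).biUnion (blockIndices m A G) = A := by
  ext i
  simp only [blockIndices, Finset.mem_biUnion, Finset.mem_filter]
  refine ⟨fun ⟨_, _, hi, _⟩ => hi, fun hi => ?_⟩
  have him : m i ∈ (Finset.range t).biUnion G := hA ▸ Finset.mem_image_of_mem m hi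
  obtain ⟨j, hj, hmj⟩ := Finset.mem_biUnion.1 him
  exact ⟨j, hj, hi, hmj⟩

end Regrouping

lemma biUnion_mem_schreier_add (α β : ℕ) {F : ℕ → Finset ℕ} {A : Finset ℕ}
    (hsucc : SuccessiveOn F A) (hmem : ∀ i ∈ A, F i ∈ Schreier α)
    (hmins : (A.image fun i => minF (F i)) ∈ Schreier β) :
    A.biUnion F ∈ Schreier (α + β) := by
  induction β generalizing A with
  | zero =>
    exact biUnion_mem_of_card_le_one (empty_mem_schreier α)
      (hsucc.card_le_one_of_card_image_le_one hmins) hmem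
  | succ β ih =>
    obtain hempty | ⟨t, G, ht, hG, hGlt, hG0, hsplit⟩ := hmins
    · rw [Finset.image_eq_empty.1 hempty, Finset.biUnion_empty]
      exact empty_mem_schreier _
    set m := fun i => minF (F i)
    set B := blockIndices m A G
    have hBA (j : ℕ) : B j ⊆ A := Finset.filter_subset _ _
    have hBimage {j : ℕ} (hj : j < t) : (B j).image m = G j :=
      image_blockIndices m A G (hsplit ▸ Finset.subset_biUnion_of_mem G (Finset.mem_range.2 hj))
    have hunion : A.biUnion F = (Finset.range t).biUnion fun j => (B j).biUnion F := by
      rw [← Finset.biUnion_biUnion, biUnion_blockIndices m A G hsplit]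
    rw [hunion, Nat.add_succ, Schreier]
    refine Or.inr ⟨t, _, ht, fun j hj => ⟨?_, ?_⟩, fun i j hij hj => ?_, ?_, rfl⟩
    · exact ih (hsucc.mono (hBA j)) (fun i hi => hmem i (hBA j hi))
        ((hBimage hj).symm ▸ (hG j hj).1)
    · obtain ⟨_, hx⟩ := (hG j hj).2
      obtain ⟨i, hi, -⟩ := Finset.mem_image.1 ((hBimage hj).symm ▸ hx)
      exact (hsucc.1 i (hBA j hi)).mono (Finset.subset_biUnion_of_mem F hi)
    · exact hsucc.finLt_biUnion (hBA i) (hBA j)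
        ((hBimage (hij.trans hj)).symm ▸ (hBimage hj).symm ▸ hGlt i j hij hj)
    · intro x hx
      obtain ⟨i, hi, hxi⟩ := Finset.mem_biUnion.1 hx
      exact (hG0 _ ((hBimage ht).symm ▸ Finset.mem_image_of_mem m hi)).trans (minF_le hxi)

theorem statement18 (α β k : ℕ) (F : ℕ → Finset ℕ)
    (hmem : ∀ i < k, F i ∈ Schreier α) (hne : ∀ i < k, (F i).Nonempty)
    (hchain : ∀ i j, i < j → j < k → FinLt (F i) (F j))
    (hmins : ((Finset.range k).image fun i => minF (F i)) ∈ Schreier β) :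
    (Finset.range k).biUnion F ∈ Schreier (α + β) := by
  have hsucc : SuccessiveOn F (Finset.range k) :=
    ⟨fun i hi => hne i (Finset.mem_range.1 hi),
      fun i _ j hj hij => hchain i j hij (Finset.mem_range.1 hj)⟩
  exact biUnion_mem_schreier_add α β hsucc (fun i hi => hmem i (Finset.mem_range.1 hi)) hmins

end Gasparis
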